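/- Let G be a Garside group of finite type and x ∈ G. Then: (1) φ(x)ι(x) ≼ Δ if and only if 𝔭(x) = ι(x), and in this case 𝔰(x) = c(x); (2) Δ ≼ φ(x)ι(x) if and only if 𝔭(x) = ι(x⁻¹) = φ(x)⁻¹Δ, and in this case 𝔰(x) = τ(d(x)). -/

import Mathlib

namespace GarsidePaper

/-- A Garside structure of finite type on a group `G`: a positive submonoid `P` with
`P ∩ P⁻¹ = {1}`, a Garside element `Δ ∈ P`, the prefix order `a ≼ b ↔ a⁻¹b ∈ P`
a lattice order (with meet `wedge` and join `vee`), the simple elements `[1,Δ]`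
generating `G` and being finite, `Δ⁻¹PΔ = P`, a finite norm on positive elements,
and the infimum and supremum functions `inf`, `sup` characterised by
`Δ^(inf x) ≼ x ≼ Δ^(sup x)` with `inf x` maximal and `sup x` minimal. -/
structure Garside (G : Type*) [Group G] where
  P : Submonoid G
  Δ : G
  purity : ∀ a : G, a ∈ P → a⁻¹ ∈ P → a = 1
  delta_mem : Δ ∈ P
  wedge : G → G → G
  vee : G → G → G
  wedge_le_left : ∀ a b : G, (wedge a b)⁻¹ * a ∈ P
  wedge_le_right : ∀ a b : G, (wedge a b)⁻¹ * b ∈ P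
  le_wedge : ∀ a b c : G, c⁻¹ * a ∈ P → c⁻¹ * b ∈ P → c⁻¹ * wedge a b ∈ P
  le_vee_left : ∀ a b : G, a⁻¹ * vee a b ∈ P
  le_vee_right : ∀ a b : G, b⁻¹ * vee a b ∈ P
  vee_le : ∀ a b c : G, a⁻¹ * c ∈ P → b⁻¹ * c ∈ P → (vee a b)⁻¹ * c ∈ P
  simples_generate : Subgroup.closure {a : G | a ∈ P ∧ a⁻¹ * Δ ∈ P} = (⊤ : Subgroup G)
  conj_pos : ∀ a : G, a ∈ P → Δ⁻¹ * a * Δ ∈ P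
  norm : G → ℕ
  norm_exists : ∀ x : G, x ∈ P → x ≠ 1 →
    ∃ l : List G, (∀ s ∈ l, s ∈ P ∧ s ≠ 1) ∧ l.prod = x ∧ l.length = norm x
  norm_max : ∀ x : G, x ∈ P → x ≠ 1 →
    ∀ l : List G, (∀ s ∈ l, s ∈ P ∧ s ≠ 1) → l.prod = x → l.length ≤ norm x
  simples_finite : Set.Finite {a : G | a ∈ P ∧ a⁻¹ * Δ ∈ P}
  inf : G → ℤ
  sup : G → ℤ
  inf_le : ∀ x : G, (Δ ^ inf x)⁻¹ * x ∈ P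
  inf_max : ∀ (x : G) (p : ℤ), (Δ ^ p)⁻¹ * x ∈ P → p ≤ inf x
  le_sup : ∀ x : G, x⁻¹ * Δ ^ sup x ∈ P
  sup_min : ∀ (x : G) (q : ℤ), x⁻¹ * Δ ^ q ∈ P → sup x ≤ q

namespace Garside

variable {G : Type*} [Group G]

/-- The prefix order `a ≼ b`. -/
def le (S : Garside G) (a b : G) : Prop := a⁻¹ * b ∈ S.P

/-- The canonical length `ℓ(x) = sup(x) - inf(x)`. -/
def len (S : Garside G) (x : G) : ℤ := S.sup x - S.inf x

/-- The initial factor `ι(x) = (x Δ^(-inf x)) ∧ Δ`. -/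
def iota (S : Garside G) (x : G) : G := S.wedge (x * S.Δ ^ (-S.inf x)) S.Δ

/-- The preferred prefix `𝔭(x) = ι(x) ∧ ι(x⁻¹)`. -/
def pp (S : Garside G) (x : G) : G := S.wedge (S.iota x) (S.iota x⁻¹)

/-- Cyclic sliding `𝔰(x) = 𝔭(x)⁻¹ x 𝔭(x)`. -/
def sl (S : Garside G) (x : G) : G := (S.pp x)⁻¹ * x * S.pp x

/-- The final factor `φ(x) = (Δ^(sup x - 1) ∧ x)⁻¹ x`. -/
def phi (S : Garside G) (x : G) : G := (S.wedge (S.Δ ^ (S.sup x - 1)) x)⁻¹ * x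

/-- Conjugation by `Δ`: `τ(x) = Δ⁻¹ x Δ`. -/
def tau (S : Garside G) (x : G) : G := S.Δ⁻¹ * x * S.Δ

/-- Cycling `c(x) = ι(x)⁻¹ x ι(x)`. -/
def cyc (S : Garside G) (x : G) : G := (S.iota x)⁻¹ * x * S.iota x

/-- Decycling `d(x) = φ(x) x φ(x)⁻¹`. -/
def dec (S : Garside G) (x : G) : G := S.phi x * x * (S.phi x)⁻¹

/-- The transport `α^{(1)} = 𝔭(x)⁻¹ α 𝔭(x^α)` of `α` at `x`. -/
def transport (S : Garside G) (x α : G) : G := (S.pp x)⁻¹ * α * S.pp (α⁻¹ * x * α)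

/-- The iterated transport: `itTransport x i α = α^{(i)}`, the transport of `α^{(i-1)}`
at `𝔰^{i-1}(x)`, with `α^{(0)} = α`. -/
def itTransport (S : Garside G) (x : G) : ℕ → G → G
  | 0, α => α
  | i + 1, α => S.transport ((S.sl)^[i] x) (S.itTransport x i α)

/-- `𝔓_i(x) = 𝔭(x) 𝔭(𝔰(x)) ⋯ 𝔭(𝔰^{i-1}(x))`, with `𝔓₀(x) = 1`. -/
def PP (S : Garside G) (x : G) : ℕ → G
  | 0 => 1
  | i + 1 => S.PP x i * S.pp ((S.sl)^[i] x)

/-- The summit set `SS(x)`. -/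
def SS (S : Garside G) (x : G) : Set G :=
  {y | IsConj x y ∧ ∀ z : G, IsConj x z → S.inf z ≤ S.inf y}

/-- The super summit set `SSS(x)`. -/
def SSS (S : Garside G) (x : G) : Set G :=
  {y | IsConj x y ∧ (∀ z : G, IsConj x z → S.inf z ≤ S.inf y) ∧
       (∀ z : G, IsConj x z → S.sup y ≤ S.sup z)}

/-- The ultra summit set `USS(x)`. -/
def USS (S : Garside G) (x : G) : Set G :=
  {y | y ∈ S.SSS x ∧ ∃ m : ℕ, 1 ≤ m ∧ (S.cyc)^[m] y = y}

/-- The reduced super summit set `RSSS(x)`. -/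
def RSSS (S : Garside G) (x : G) : Set G :=
  {y | IsConj x y ∧ (∃ m : ℕ, 1 ≤ m ∧ (S.cyc)^[m] y = y) ∧
       (∃ n : ℕ, 1 ≤ n ∧ (S.dec)^[n] y = y)}

/-- The set of sliding circuits `SC(x)`. -/
def SC (S : Garside G) (x : G) : Set G :=
  {y | IsConj x y ∧ ∃ m : ℕ, 1 ≤ m ∧ (S.sl)^[m] y = y}

end Garside

/-!
Everything rests on the identity `ι(x⁻¹) = φ(x)⁻¹ Δ`: it turns `φ(x)ι(x) ≼ Δ` into
`ι(x) ≼ ι(x⁻¹)` and `Δ ≼ φ(x)ι(x)` into `ι(x⁻¹) ≼ ι(x)`, which say exactly that the meet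
`𝔭(x) = ι(x) ∧ ι(x⁻¹)` is `ι(x)`, resp. `ι(x⁻¹)`; the formulas for `𝔰(x)` follow by substitution.
The identity comes from `inf(x⁻¹) = -sup(x)` and from right multiplication by `Δ` being an order
automorphism of `≼`, which needs `ΔPΔ⁻¹ ⊆ P` besides the axiom `Δ⁻¹PΔ ⊆ P`. For that, `τ` maps
the finite set of simple elements to itself, so by pigeonhole some `τⁿ` with `n > 0` fixes every
simple element; as these generate `G`, `Δⁿ` is central and `ΔpΔ⁻¹ = τⁿ⁻¹(p)`.
-/

namespace Garside

variable {G : Type*} [Group G] (S : Garside G)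

theorem le_refl (a : G) : S.le a a := by
  rw [le, inv_mul_cancel]
  exact S.P.one_mem

theorem le_antisymm {a b : G} (hab : S.le a b) (hba : S.le b a) : a = b := by
  have hba' : (a⁻¹ * b)⁻¹ ∈ S.P := by rw [mul_inv_rev, inv_inv]; exact hba
  exact inv_mul_eq_one.mp (S.purity _ hab hba')

theorem wedge_eq_of_le {a b c : G} (hca : S.le c a) (hcb : S.le c b)
    (h : ∀ d, S.le d a → S.le d b → S.le d c) : S.wedge a b = c :=
  S.le_antisymm (h _ (S.wedge_le_left a b) (S.wedge_le_right a b)) (S.le_wedge a b c hca hcb)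

theorem wedge_eq_left_iff {a b : G} : S.wedge a b = a ↔ S.le a b :=
  ⟨fun h => h ▸ S.wedge_le_right a b,
    fun h => S.wedge_eq_of_le (S.le_refl a) h fun _ hda _ => hda⟩

theorem wedge_eq_right_iff {a b : G} : S.wedge a b = b ↔ S.le b a :=
  ⟨fun h => h ▸ S.wedge_le_left a b,
    fun h => S.wedge_eq_of_le h (S.le_refl b) fun _ _ hdb => hdb⟩

theorem map_wedge (f : G ≃ G) (hf : ∀ a b, S.le (f a) (f b) ↔ S.le a b) (a b : G) :
    f (S.wedge a b) = S.wedge (f a) (f b) := by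
  refine (S.wedge_eq_of_le ((hf _ _).2 (S.wedge_le_left a b))
    ((hf _ _).2 (S.wedge_le_right a b)) fun d hda hdb => ?_).symm
  rw [← f.apply_symm_apply d] at hda hdb ⊢
  exact (hf _ _).2 (S.le_wedge a b _ ((hf _ _).1 hda) ((hf _ _).1 hdb))

theorem mul_wedge (c a b : G) : c * S.wedge a b = S.wedge (c * a) (c * b) :=
  S.map_wedge (Equiv.mulLeft c) (fun a b => by simp only [le, Equiv.coe_mulLeft, mul_inv_rev,
    mul_assoc, inv_mul_cancel_left]) a b

theorem tau_injective : Function.Injective S.tau := fun a b h => by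
  simpa only [tau, mul_left_inj, mul_right_inj] using h

theorem tau_iterate (n : ℕ) (g : G) : S.tau^[n] g = (S.Δ ^ n)⁻¹ * g * S.Δ ^ n := by
  induction n with
  | zero => simp
  | succ n ih => rw [Function.iterate_succ_apply', ih, tau]; group

theorem tau_iterate_mem (n : ℕ) {p : G} (hp : p ∈ S.P) : S.tau^[n] p ∈ S.P := by
  induction n with
  | zero => exact hp
  | succ n ih => rw [Function.iterate_succ_apply']; exact S.conj_pos _ ih

def simples : Set G := {a : G | a ∈ S.P ∧ a⁻¹ * S.Δ ∈ S.P}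

theorem mapsTo_tau_simples : Set.MapsTo S.tau S.simples S.simples := fun s hs =>
  ⟨S.conj_pos s hs.1, by
    rw [show (S.tau s)⁻¹ * S.Δ = S.tau (s⁻¹ * S.Δ) by simp only [tau]; group]
    exact S.conj_pos _ hs.2⟩

theorem exists_tau_iterate_eqOn_simples :
    ∃ n, 0 < n ∧ Set.EqOn S.tau^[n] id S.simples := by
  have : Finite S.simples := S.simples_finite.to_subtype
  obtain ⟨i, j, hij, heq⟩ :=
    Finite.exists_ne_map_eq_of_infinite fun n => (S.mapsTo_tau_simples.iterate n).restrict
  wlog hlt : i < j generalizing i j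
  · exact this j i hij.symm heq.symm (hij.lt_or_gt.resolve_left hlt)
  refine ⟨j - i, Nat.sub_pos_of_lt hlt, fun s hs => (S.tau_injective.iterate i) ?_⟩
  have hs_ij := congrArg Subtype.val (congrFun heq ⟨s, hs⟩)
  simp only [Set.MapsTo.val_restrict_apply] at hs_ij
  rw [← Function.iterate_add_apply, Nat.add_sub_cancel' hlt.le, id, hs_ij]

theorem exists_tau_iterate_eq_id : ∃ n, 0 < n ∧ S.tau^[n] = id := by
  obtain ⟨n, hn, hfix⟩ := S.exists_tau_iterate_eqOn_simples
  have hcomm : S.simples ⊆ Subgroup.centralizer {S.Δ ^ n} := fun s hs => by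
    rw [SetLike.mem_coe, Subgroup.mem_centralizer_singleton_iff]
    have hs' : (S.Δ ^ n)⁻¹ * s * S.Δ ^ n = s := by rw [← tau_iterate]; exact hfix hs
    calc s * S.Δ ^ n = S.Δ ^ n * ((S.Δ ^ n)⁻¹ * s * S.Δ ^ n) := by group
      _ = S.Δ ^ n * s := by rw [hs']
  refine ⟨n, hn, funext fun g => ?_⟩
  have hg : g ∈ Subgroup.centralizer {S.Δ ^ n} :=
    (Subgroup.closure_le _).2 hcomm (S.simples_generate ▸ Subgroup.mem_top g)
  rw [Subgroup.mem_centralizer_singleton_iff] at hg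
  rw [tau_iterate, mul_assoc, hg, inv_mul_cancel_left, id]

theorem delta_mul_mul_delta_inv_mem {p : G} (hp : p ∈ S.P) : S.Δ * p * S.Δ⁻¹ ∈ S.P := by
  obtain ⟨n, hn, hid⟩ := S.exists_tau_iterate_eq_id
  obtain ⟨m, rfl⟩ : ∃ m, n = m + 1 := ⟨n - 1, by omega⟩
  have h := congrFun hid (S.Δ * p * S.Δ⁻¹)
  rw [Function.iterate_succ_apply, show S.tau (S.Δ * p * S.Δ⁻¹) = p by simp only [tau]; group,
    id] at h
  exact h ▸ S.tau_iterate_mem m hp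

theorem zpow_mul_mul_zpow_inv_mem (k : ℤ) {p : G} (hp : p ∈ S.P) :
    S.Δ ^ k * p * (S.Δ ^ k)⁻¹ ∈ S.P := by
  induction k using Int.induction_on with
  | zero => simpa using hp
  | succ k ih =>
    rw [show S.Δ ^ ((k : ℤ) + 1) * p * (S.Δ ^ ((k : ℤ) + 1))⁻¹
        = S.Δ * (S.Δ ^ (k : ℤ) * p * (S.Δ ^ (k : ℤ))⁻¹) * S.Δ⁻¹ by group]
    exact S.delta_mul_mul_delta_inv_mem ih
  | pred k ih =>
    rw [show S.Δ ^ (-(k : ℤ) - 1) * p * (S.Δ ^ (-(k : ℤ) - 1))⁻¹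
        = S.tau (S.Δ ^ (-(k : ℤ)) * p * (S.Δ ^ (-(k : ℤ)))⁻¹) by simp only [tau]; group]
    exact S.conj_pos _ ih

theorem tau_mem_iff {p : G} : S.tau p ∈ S.P ↔ p ∈ S.P :=
  ⟨fun h => by simpa only [tau, mul_assoc, mul_inv_cancel, mul_one, mul_inv_cancel_left]
    using S.delta_mul_mul_delta_inv_mem h, S.conj_pos p⟩

theorem wedge_mul_delta (a b : G) : S.wedge a b * S.Δ = S.wedge (a * S.Δ) (b * S.Δ) :=
  S.map_wedge (Equiv.mulRight S.Δ) (fun a b => by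
    rw [le, le, ← S.tau_mem_iff (p := a⁻¹ * b), tau, Equiv.coe_mulRight]
    simp only [mul_inv_rev, mul_assoc]) a b

theorem inf_inv (x : G) : S.inf x⁻¹ = -S.sup x := by
  have h₁ : -S.sup x ≤ S.inf x⁻¹ := S.inf_max _ _ <| by
    simpa only [zpow_neg, inv_inv, mul_assoc, inv_mul_cancel, mul_one, mul_inv_cancel]
      using S.zpow_mul_mul_zpow_inv_mem (S.sup x) (S.le_sup x)
  have h₂ : S.sup x ≤ -S.inf x⁻¹ := S.sup_min _ _ <| by
    simpa only [zpow_neg, mul_assoc, mul_inv_cancel_left]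
      using S.zpow_mul_mul_zpow_inv_mem (S.inf x⁻¹) (S.inf_le x⁻¹)
  omega

theorem iota_inv (x : G) : S.iota x⁻¹ = (S.phi x)⁻¹ * S.Δ :=
  calc S.iota x⁻¹ = S.wedge (x⁻¹ * S.Δ ^ S.sup x) S.Δ := by rw [iota, inf_inv, neg_neg]
    _ = x⁻¹ * S.wedge (S.Δ ^ S.sup x) (x * S.Δ) := by rw [mul_wedge, inv_mul_cancel_left]
    _ = x⁻¹ * (S.wedge (S.Δ ^ (S.sup x - 1)) x * S.Δ) := by
      rw [wedge_mul_delta, ← zpow_add_one, sub_add_cancel]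
    _ = (S.phi x)⁻¹ * S.Δ := by rw [phi]; group

theorem phi_mul_iota_le_delta_iff (x : G) :
    S.le (S.phi x * S.iota x) S.Δ ↔ S.le (S.iota x) (S.iota x⁻¹) := by
  simp only [le, iota_inv, mul_inv_rev, mul_assoc]

theorem delta_le_phi_mul_iota_iff (x : G) :
    S.le S.Δ (S.phi x * S.iota x) ↔ S.le (S.iota x⁻¹) (S.iota x) := by
  simp only [le, iota_inv, mul_inv_rev, inv_inv, mul_assoc]

end Garside

open Garside in
theorem statement2 {G : Type*} [Group G] (S : Garside G) (x : G) :
    ((S.le (S.phi x * S.iota x) S.Δ ↔ S.pp x = S.iota x) ∧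
      (S.le (S.phi x * S.iota x) S.Δ → S.sl x = S.cyc x)) ∧
    ((S.le S.Δ (S.phi x * S.iota x) ↔
        S.pp x = S.iota x⁻¹ ∧ S.iota x⁻¹ = (S.phi x)⁻¹ * S.Δ) ∧
      (S.le S.Δ (S.phi x * S.iota x) → S.sl x = S.tau (S.dec x))) := by
  have h₁ : S.le (S.phi x * S.iota x) S.Δ ↔ S.pp x = S.iota x := by
    rw [phi_mul_iota_le_delta_iff, pp, wedge_eq_left_iff]
  have h₂ : S.le S.Δ (S.phi x * S.iota x) ↔ S.pp x = S.iota x⁻¹ := by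
    rw [delta_le_phi_mul_iota_iff, pp, wedge_eq_right_iff]
  refine ⟨⟨h₁, fun h => by rw [sl, cyc, h₁.1 h]⟩,
    ⟨h₂.trans (and_iff_left (S.iota_inv x)).symm, fun h => ?_⟩⟩
  rw [sl, tau, dec, h₂.1 h, iota_inv]
  group

end GarsidePaper
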